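/- The naive weight w(t) = T(t)σ(t) with σ(t) = φ_s(-c(t-t*)) attains its local maximum at a point t̄ with t̄ < t* (the maximum occurs strictly before the surface intersection). -/

import Mathlib

/-!
Along the ray, `w' = T (σ' - σ²)`. With `e = exp (s c (t - t*))`, which increases from `0` to `∞`
and equals `1` at `t*`, one computes `σ' - σ² = s² e / (1 + e)⁴ · (c (1 - e²) - e)`. The quadratic
`c (1 - e²) - e` has exactly one positive root `e₀`, and `e₀ < 1`. Hence `w` increases up to the
time `t̄` at which `e = e₀` and decreases afterwards, and `e₀ < 1` means `t̄ < t*`.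
-/

open Real Filter MeasureTheory

/-- The sigmoid function `Φ_s(x) = (1 + e^{-sx})⁻¹`. -/
noncomputable def Phi (s x : ℝ) : ℝ := (1 + Real.exp (-s * x))⁻¹

/-- The logistic density `φ_s(x) = s e^{-sx} / (1 + e^{-sx})²`. -/
noncomputable def phi (s x : ℝ) : ℝ :=
  s * Real.exp (-s * x) / (1 + Real.exp (-s * x)) ^ 2

theorem isLocalMax_of_hasDerivAt_of_sign {f f' : ℝ → ℝ} {b : ℝ}
    (hf : ∀ x, HasDerivAt f (f' x) x) (hpos : ∀ x < b, 0 ≤ f' x)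
    (hneg : ∀ x, b < x → f' x ≤ 0) : IsLocalMax f b :=
  isLocalMax_of_deriv (hf b).continuousAt
    (Eventually.of_forall fun x => (hf x).differentiableAt)
    (eventually_nhdsWithin_of_forall fun x hx => (hf x).deriv ▸ hpos x hx)
    (eventually_nhdsWithin_of_forall fun x hx => (hf x).deriv ▸ hneg x hx)

theorem hasDerivAt_exp_neg_integral_mul {σ : ℝ → ℝ} {σ' a t : ℝ} (hσ : Continuous σ)
    (hσt : HasDerivAt σ σ' t) :
    HasDerivAt (fun t => exp (-∫ u in a..t, σ u) * σ t)
      (exp (-∫ u in a..t, σ u) * (σ' - σ t ^ 2)) t := by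
  have hF := (hσ.integral_hasStrictDerivAt a t).hasDerivAt
  exact (hF.neg.exp.mul hσt).congr_deriv (by simp only [Pi.neg_apply]; ring)

@[fun_prop]
theorem continuous_phi (s : ℝ) : Continuous (phi s) := by
  unfold phi
  fun_prop (disch := intro x; positivity)

theorem hasDerivAt_phi_affine (s c tstar t : ℝ) :
    HasDerivAt (fun t => phi s (-c * (t - tstar)))
      (phi s (-c * (t - tstar)) ^ 2 +
        s ^ 2 * exp (s * c * (t - tstar)) / (1 + exp (s * c * (t - tstar))) ^ 4 *
          (c * (1 - exp (s * c * (t - tstar)) ^ 2) - exp (s * c * (t - tstar)))) t := by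
  set E : ℝ → ℝ := fun t => exp (s * c * (t - tstar))
  have hσ : ∀ t, phi s (-c * (t - tstar)) = s * E t / (1 + E t) ^ 2 := fun t => by
    rw [phi, show -s * (-c * (t - tstar)) = s * c * (t - tstar) by ring]
  have hE : ∀ t, HasDerivAt E (s * c * E t) t := fun t => by
    convert (((hasDerivAt_id' t).sub_const tstar).const_mul (s * c)).exp using 1
    ring
  have hpos : 0 < 1 + E t := by positivity
  rw [funext hσ, hσ t]
  refine (((hE t).const_mul s).div (((hE t).const_add 1).pow 2) (pow_pos hpos 2).ne').congr_deriv ?_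
  simp only [E, Pi.pow_apply] at hpos ⊢
  field_simp
  ring

theorem exists_root_mem_Ioo_factorization {c : ℝ} (hc : 0 < c) :
    ∃ e₀ ∈ Set.Ioo 0 1, ∀ e, c * (1 - e ^ 2) - e = (e₀ - e) * (c * (e₀ + e) + 1) := by
  set q := √(1 + 4 * c ^ 2)
  have hq : q ^ 2 = 1 + 4 * c ^ 2 := sq_sqrt (by positivity)
  have hq1 : 1 < q := by nlinarith [sqrt_nonneg (1 + 4 * c ^ 2)]
  have hq2 : q < 1 + 2 * c := by nlinarith [sqrt_nonneg (1 + 4 * c ^ 2)]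
  refine ⟨(q - 1) / (2 * c), ⟨by apply div_pos <;> linarith,
    by rw [div_lt_one (by positivity)]; linarith⟩, fun e => ?_⟩
  field_simp
  nlinarith [hq]

theorem naive_weight_max_before_surface_general (s c tstar : ℝ) (hs : 0 < s) (hc : 0 < c)
    (σ T w : ℝ → ℝ)
    (hσ : σ = fun t => phi s (-c * (t - tstar)))
    (hT : T = fun t => Real.exp (-(∫ u in (0 : ℝ)..t, σ u)))
    (hw : w = fun t => T t * σ t) :
    ∃ tbar, tbar < tstar ∧ IsLocalMax w tbar := by
  obtain ⟨e₀, ⟨he₀, he₀_lt_one⟩, hfactor⟩ := exists_root_mem_Ioo_factorization hc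
  have hk : 0 < s * c := mul_pos hs hc
  set E : ℝ → ℝ := fun t => exp (s * c * (t - tstar))
  have hE_mono : StrictMono E := fun t t' h =>
    exp_lt_exp.2 (mul_lt_mul_of_pos_left (sub_lt_sub_right h _) hk)
  set tbar := tstar + log e₀ / (s * c)
  have hE_tbar : E tbar = e₀ := by
    simp only [E, tbar, add_sub_cancel_left, mul_div_cancel₀ _ hk.ne', exp_log he₀]
  set P : ℝ → ℝ := fun t => T t * (s ^ 2 * E t / (1 + E t) ^ 4) * (c * (e₀ + E t) + 1)
  have hP : ∀ t, 0 < P t := fun t => by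
    simp only [P, E, hT]
    positivity
  have hw' : ∀ t, HasDerivAt w (P t * (e₀ - E t)) t := fun t => by
    subst hσ hT hw
    refine (hasDerivAt_exp_neg_integral_mul (by fun_prop)
      (hasDerivAt_phi_affine s c tstar t)).congr_deriv ?_
    rw [add_sub_cancel_left, hfactor]
    ring
  refine ⟨tbar, ?_, isLocalMax_of_hasDerivAt_of_sign hw' (fun t ht => ?_) (fun t ht => ?_)⟩
  · have : log e₀ / (s * c) < 0 := div_neg_of_neg_of_pos (log_neg he₀ he₀_lt_one) hk
    linarith
  · exact mul_nonneg (hP t).le (sub_nonneg.2 (hE_tbar ▸ hE_mono ht).le)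
  · exact mul_nonpos_of_nonneg_of_nonpos (hP t).le (sub_nonpos.2 (hE_tbar ▸ hE_mono ht).le)

/-- The naive weight `w = T σ` with `σ(t) = φ_s(-c(t - t*))` attains a local
maximum at some point strictly before the surface intersection `t*`. -/
theorem naive_weight_max_before_surface (s c tstar : ℝ) (hs : 0 < s) (hc : 0 < c)
    (htstar : 0 < tstar)
    (σ T w : ℝ → ℝ)
    (hσ : σ = fun t => phi s (-c * (t - tstar)))
    (hT : T = fun t => Real.exp (-(∫ u in (0 : ℝ)..t, σ u)))
    (hw : w = fun t => T t * σ t) :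
    ∃ tbar, tbar < tstar ∧ IsLocalMax w tbar :=
  naive_weight_max_before_surface_general s c tstar hs hc σ T w hσ hT hw
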